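/- Let k be a field, S = k[x₀,…,x_m], 𝔪 = (x₀,…,x_m), let h : ℕ → ℕ be a function, and let C < D be natural numbers. Define h̄ : ℕ → ℕ by h̄(d) = h(d) for d < D and h̄(d) = 0 for d ≥ D. Assume: (i) every homogeneous ideal I ⊆ S with HF(S/I) = h is generated in degrees ≤ C; (ii) every homogeneous ideal J ⊆ S with HF(S/J) = h̄ is generated by homogeneous polynomials each of degree at most C or of degree exactly D; (iii) every homogeneous ideal I' ⊆ S generated in degrees ≤ C with HF(S/I';d) = h(d) for all d < D satisfies HF(S/I';d) = h(d) for all d ∈ ℕ. Then the assignments θ(I) = I + 𝔪^D and ρ(J) = J_{≤C} are mutually inverse bijections between the set of homogeneous ideals I ⊆ S with HF(S/I) = h and the set of homogeneous ideals J ⊆ S with HF(S/J) = h̄. -/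

import Mathlib

open MvPolynomial

attribute [local instance] MvPolynomial.gradedAlgebra

/-- The Hilbert function of `S/I` in degree `d`: the `k`-dimension of the image of the
degree-`d` homogeneous component of `S` in the quotient `S/I`. -/
noncomputable def HF {k : Type*} [Field k] {n : ℕ} (I : Ideal (MvPolynomial (Fin n) k))
    (d : ℕ) : ℕ :=
  Module.finrank k
    ((homogeneousSubmodule (Fin n) k d).map (Ideal.Quotient.mkₐ k I).toLinearMap)

/-- The irrelevant maximal ideal `𝔪 = (x₀, …, x_m)`. -/
noncomputable def irrelevantIdeal (k : Type*) [Field k] (n : ℕ) : Ideal (MvPolynomial (Fin n) k) :=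
  Ideal.span (Set.range MvPolynomial.X)

/-- `J_{≤ B}`: the ideal generated by the homogeneous polynomials of `J` of degree at
most `B`. -/
noncomputable def truncIdeal {k : Type*} [Field k] {n : ℕ} (J : Ideal (MvPolynomial (Fin n) k))
    (B : ℕ) : Ideal (MvPolynomial (Fin n) k) :=
  Ideal.span {f | f ∈ J ∧ ∃ d ≤ B, f.IsHomogeneous d}

/-- An ideal is generated in degrees `≤ C` if it admits a generating set consisting of
homogeneous polynomials of degree at most `C`. -/
def GenInDegLE {k : Type*} [Field k] {n : ℕ} (I : Ideal (MvPolynomial (Fin n) k))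
    (C : ℕ) : Prop :=
  ∃ G : Set (MvPolynomial (Fin n) k), I = Ideal.span G ∧
    ∀ f ∈ G, ∃ d ≤ C, f.IsHomogeneous d

/-! For a homogeneous ideal `I` and `d < D`, the forms of degree `d` in `I + 𝔪^D` are those of `I`,
because `𝔪^D` has no nonzero homogeneous components below degree `D`; and `I + 𝔪^D` contains
every form of degree `≥ D`. So `θ` turns the Hilbert function `h` into `h̄`. Conversely, (ii) gives
`J = J_{≤C} + 𝔪^D` whenever `J` has Hilbert function `h̄`, so `J_{≤C}` agrees with `J` below `D`
and (iii) upgrades its Hilbert function to `h`. The identity `ρ θ = id` comes from (i) and `C < D`,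
and `θ ρ = id` from that decomposition of `J`. -/

namespace MvPolynomial

variable {σ R : Type*} [CommSemiring R]

lemma homogeneousComponent_eq_zero_of_mem_pow_idealOfVars {D d : ℕ} (hd : d < D)
    {f : MvPolynomial σ R} (hf : f ∈ idealOfVars σ R ^ D) : homogeneousComponent d f = 0 := by
  ext s
  rw [coeff_homogeneousComponent, coeff_zero]
  split_ifs with hs
  · exact (mem_pow_idealOfVars_iff' D f).mp hf s (hs ▸ hd)
  · rfl

lemma IsHomogeneous.mem_pow_idealOfVars {D d : ℕ} (hDd : D ≤ d) {f : MvPolynomial σ R}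
    (hf : f.IsHomogeneous d) : f ∈ idealOfVars σ R ^ D :=
  (mem_pow_idealOfVars_iff D f).mpr fun s hs => by
    by_contra hlt
    exact mem_support_iff.mp hs (hf.coeff_eq_zero (by omega))

lemma pow_idealOfVars_le {D : ℕ} {J : Ideal (MvPolynomial σ R)}
    (hJ : ∀ f : MvPolynomial σ R, f.IsHomogeneous D → f ∈ J) : idealOfVars σ R ^ D ≤ J := by
  rw [pow_idealOfVars_eq_span, Ideal.span_le]
  rintro _ ⟨s, hs, rfl⟩
  exact hJ _ (isHomogeneous_monomial 1 hs)

lemma isHomogeneous_pow_idealOfVars (D : ℕ) :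
    (idealOfVars σ R ^ D).IsHomogeneous (homogeneousSubmodule σ R) := by
  rw [pow_idealOfVars_eq_span]
  refine Ideal.homogeneous_span _ _ ?_
  rintro _ ⟨s, hs, rfl⟩
  exact ⟨D, isHomogeneous_monomial 1 hs⟩

end MvPolynomial

namespace Ideal.IsHomogeneous

variable {σ R : Type*} [CommSemiring R] {I : Ideal (MvPolynomial σ R)}

lemma mem_of_mem_sup_pow_idealOfVars (hI : I.IsHomogeneous (homogeneousSubmodule σ R))
    {D d : ℕ} (hd : d < D) {f : MvPolynomial σ R} (hf : f.IsHomogeneous d)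
    (hmem : f ∈ I ⊔ idealOfVars σ R ^ D) : f ∈ I := by
  obtain ⟨a, ha, b, hb, rfl⟩ := Submodule.mem_sup.mp hmem
  rw [← homogeneousComponent_eq_self hf, map_add,
    homogeneousComponent_eq_zero_of_mem_pow_idealOfVars hd hb, add_zero]
  exact homogeneousComponent_mem_of_mem hI ha d

end Ideal.IsHomogeneous

section HilbertFunction

variable {k : Type*} [Field k] {n : ℕ}

instance (d : ℕ) : Module.Finite k (homogeneousSubmodule (Fin n) k d) :=
  Module.Finite.iff_fg.mpr (homogeneousSubmodule_fg (Fin n) k d)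

lemma HF_add_finrank_comap (I : Ideal (MvPolynomial (Fin n) k)) (d : ℕ) :
    HF I d + Module.finrank k
      ((I.restrictScalars k).comap (homogeneousSubmodule (Fin n) k d).subtype) =
      Module.finrank k (homogeneousSubmodule (Fin n) k d) := by
  have := LinearMap.finrank_range_add_finrank_ker
    ((Ideal.Quotient.mkₐ k I).toLinearMap ∘ₗ (homogeneousSubmodule (Fin n) k d).subtype)
  have hker : LinearMap.ker (Ideal.Quotient.mkₐ k I).toLinearMap = I.restrictScalars k := by
    ext f
    simp [Ideal.Quotient.eq_zero_iff_mem]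
  rwa [LinearMap.range_comp, Submodule.range_subtype, LinearMap.ker_comp, hker] at this

lemma HF_eq_zero_iff {I : Ideal (MvPolynomial (Fin n) k)} {d : ℕ} :
    HF I d = 0 ↔ ∀ f : MvPolynomial (Fin n) k, f.IsHomogeneous d → f ∈ I := by
  rw [HF, Submodule.finrank_eq_zero, ← le_bot_iff, Submodule.map_le_iff_le_comap]
  simp [SetLike.le_def, Ideal.Quotient.eq_zero_iff_mem]

lemma HF_congr {I J : Ideal (MvPolynomial (Fin n) k)} {d : ℕ}
    (hIJ : ∀ f : MvPolynomial (Fin n) k, f.IsHomogeneous d → (f ∈ I ↔ f ∈ J)) :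
    HF I d = HF J d := by
  have hcomap : (I.restrictScalars k).comap (homogeneousSubmodule (Fin n) k d).subtype =
      (J.restrictScalars k).comap (homogeneousSubmodule (Fin n) k d).subtype := by
    ext ⟨f, hf⟩
    exact hIJ f hf
  have hI := HF_add_finrank_comap I d
  have hJ := HF_add_finrank_comap J d
  rw [hcomap] at hI
  omega

lemma HF_eq_of_le_of_le_sup_pow_idealOfVars {I J : Ideal (MvPolynomial (Fin n) k)}
    (hI : I.IsHomogeneous (homogeneousSubmodule (Fin n) k)) {D d : ℕ} (hd : d < D)
    (hIJ : I ≤ J) (hJI : J ≤ I ⊔ idealOfVars (Fin n) k ^ D) : HF I d = HF J d :=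
  HF_congr fun _ hf => ⟨(hIJ ·), fun hfJ => hI.mem_of_mem_sup_pow_idealOfVars hd hf (hJI hfJ)⟩

lemma HF_eq_zero_of_pow_idealOfVars_le {J : Ideal (MvPolynomial (Fin n) k)} {D d : ℕ}
    (hDd : D ≤ d) (hJ : idealOfVars (Fin n) k ^ D ≤ J) : HF J d = 0 :=
  HF_eq_zero_iff.mpr fun _ hf => hJ (hf.mem_pow_idealOfVars hDd)

end HilbertFunction

section Truncation

variable {k : Type*} [Field k] {n : ℕ} {I J : Ideal (MvPolynomial (Fin n) k)} {C D : ℕ}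

lemma truncIdeal_le (J : Ideal (MvPolynomial (Fin n) k)) (C : ℕ) : truncIdeal J C ≤ J :=
  Ideal.span_le.mpr fun _ hf => hf.1

lemma isHomogeneous_truncIdeal (J : Ideal (MvPolynomial (Fin n) k)) (C : ℕ) :
    (truncIdeal J C).IsHomogeneous (homogeneousSubmodule (Fin n) k) :=
  Ideal.homogeneous_span _ _ fun _ ⟨_, d, _, hf⟩ => ⟨d, hf⟩

lemma genInDegLE_truncIdeal (J : Ideal (MvPolynomial (Fin n) k)) (C : ℕ) :
    GenInDegLE (truncIdeal J C) C :=
  ⟨_, rfl, fun _ hf => hf.2⟩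

lemma GenInDegLE.truncIdeal_eq (hI : GenInDegLE I C) : truncIdeal I C = I := by
  obtain ⟨G, rfl, hG⟩ := hI
  refine le_antisymm (truncIdeal_le _ C) (Ideal.span_le.mpr fun g hg => ?_)
  exact Ideal.subset_span ⟨Ideal.subset_span hg, hG g hg⟩

lemma truncIdeal_sup_pow_idealOfVars (hI : I.IsHomogeneous (homogeneousSubmodule (Fin n) k))
    (hCD : C < D) : truncIdeal (I ⊔ idealOfVars (Fin n) k ^ D) C = truncIdeal I C := by
  refine congr_arg Ideal.span <| Set.ext fun f =>
    ⟨?_, fun ⟨hf, hdeg⟩ => ⟨Ideal.mem_sup_left hf, hdeg⟩⟩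
  rintro ⟨hf, d, hdC, hfd⟩
  exact ⟨hI.mem_of_mem_sup_pow_idealOfVars (hdC.trans_lt hCD) hfd hf, d, hdC, hfd⟩

lemma le_truncIdeal_sup_pow_idealOfVars {G : Set (MvPolynomial (Fin n) k)}
    (hJ : J = Ideal.span G)
    (hG : ∀ f ∈ G, (∃ d ≤ C, f.IsHomogeneous d) ∨ f.IsHomogeneous D) :
    J ≤ truncIdeal J C ⊔ idealOfVars (Fin n) k ^ D := by
  conv_lhs => rw [hJ]
  refine Ideal.span_le.mpr fun g hg => ?_
  rcases hG g hg with hdeg | hgD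
  · exact Ideal.mem_sup_left (Ideal.subset_span ⟨hJ ▸ Ideal.subset_span hg, hdeg⟩)
  · exact Ideal.mem_sup_right (hgD.mem_pow_idealOfVars le_rfl)

lemma eq_truncIdeal_sup_pow_idealOfVars (hJ : J ≤ truncIdeal J C ⊔ idealOfVars (Fin n) k ^ D)
    (hD : HF J D = 0) : J = truncIdeal J C ⊔ idealOfVars (Fin n) k ^ D :=
  le_antisymm hJ (sup_le (truncIdeal_le J C) (pow_idealOfVars_le (HF_eq_zero_iff.mp hD)))

end Truncation

lemma irrelevantIdeal_eq_idealOfVars (k : Type*) [Field k] (n : ℕ) :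
    irrelevantIdeal k n = idealOfVars (Fin n) k :=
  rfl

theorem theta_rho_mutually_inverse_bijections
    {k : Type*} [Field k] (m : ℕ) (h : ℕ → ℕ) (C D : ℕ) (hCD : C < D)
    (hbar : ℕ → ℕ) (hbar_def : ∀ d, hbar d = if d < D then h d else 0)
    -- the set of homogeneous ideals with Hilbert function h
    (A : Set (Ideal (MvPolynomial (Fin (m+1)) k)))
    (hA : A = {I | Ideal.IsHomogeneous (homogeneousSubmodule (Fin (m+1)) k) I ∧ HF I = h})
    -- the set of homogeneous ideals with Hilbert function h̄
    (B : Set (Ideal (MvPolynomial (Fin (m+1)) k)))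
    (hB : B = {J | Ideal.IsHomogeneous (homogeneousSubmodule (Fin (m+1)) k) J ∧ HF J = hbar})
    -- (i) every homogeneous ideal with Hilbert function h is generated in degrees ≤ C
    (hyp1 : ∀ I ∈ A, GenInDegLE I C)
    -- (ii) every homogeneous ideal with Hilbert function h̄ is generated by homogeneous
    -- polynomials each of degree at most C or of degree exactly D
    (hyp2 : ∀ J ∈ B, ∃ G : Set (MvPolynomial (Fin (m+1)) k), J = Ideal.span G ∧
      ∀ f ∈ G, (∃ d ≤ C, f.IsHomogeneous d) ∨ f.IsHomogeneous D)
    -- (iii) every homogeneous ideal generated in degrees ≤ C whose Hilbert function agrees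
    -- with h below D has Hilbert function h everywhere
    (hyp3 : ∀ I' : Ideal (MvPolynomial (Fin (m+1)) k),
      Ideal.IsHomogeneous (homogeneousSubmodule (Fin (m+1)) k) I' → GenInDegLE I' C →
      (∀ d < D, HF I' d = h d) → ∀ d, HF I' d = h d) :
    (∀ I ∈ A, I + irrelevantIdeal k (m+1) ^ D ∈ B) ∧
    (∀ J ∈ B, truncIdeal J C ∈ A) ∧
    (∀ I ∈ A, truncIdeal (I + irrelevantIdeal k (m+1) ^ D) C = I) ∧
    (∀ J ∈ B, truncIdeal J C + irrelevantIdeal k (m+1) ^ D = J) := by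
  simp only [Submodule.add_eq_sup, irrelevantIdeal_eq_idealOfVars]
  have hsplit : ∀ J ∈ B, J ≤ truncIdeal J C ⊔ idealOfVars (Fin (m+1)) k ^ D := fun J hJ =>
    have ⟨_, hJG, hG⟩ := hyp2 J hJ
    le_truncIdeal_sup_pow_idealOfVars hJG hG
  subst hA hB
  refine ⟨fun I ⟨hI, hIh⟩ => ?_, fun J hJ => ?_, fun I hI => ?_, fun J hJ => ?_⟩
  · refine ⟨hI.sup (isHomogeneous_pow_idealOfVars D), funext fun d => ?_⟩
    rw [hbar_def]
    split_ifs with hd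
    · rw [← hIh, HF_eq_of_le_of_le_sup_pow_idealOfVars hI hd le_sup_left le_rfl]
    · exact HF_eq_zero_of_pow_idealOfVars_le (not_lt.mp hd) le_sup_right
  · have hagree : ∀ d < D, HF (truncIdeal J C) d = h d := fun d hd => by
      rw [HF_eq_of_le_of_le_sup_pow_idealOfVars (isHomogeneous_truncIdeal J C) hd
        (truncIdeal_le J C) (hsplit J hJ), hJ.2, hbar_def, if_pos hd]
    exact ⟨isHomogeneous_truncIdeal J C, funext <|
      hyp3 _ (isHomogeneous_truncIdeal J C) (genInDegLE_truncIdeal J C) hagree⟩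
  · rw [truncIdeal_sup_pow_idealOfVars hI.1 hCD, (hyp1 I hI).truncIdeal_eq]
  · exact (eq_truncIdeal_sup_pow_idealOfVars (hsplit J hJ)
      (by rw [hJ.2, hbar_def, if_neg D.lt_irrefl])).symm
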